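/- Let a, τ, r be integers with 1 < a ≤ τ, 1 ≤ r < τ and τ + 1 > a(r+1). Then every (a, a(r+1)−1, r) LRSC is also an (a, τ, r) LRSC. Consequently, there exists an (a, τ, r) LRSC of rate r/(r+1), which equals min{(τ+1−a)/(τ+1), r/(r+1)} and is therefore rate-optimal. -/

import Mathlib

/-- A packet-level code with a causal systematic encoder: the parity part of the
coded packet at time `t` is a fixed function of the message packets at times `≤ t`. -/
structure PacketCode (F : Type) (k n : ℕ) where
  parity : (ℤ → Fin k → F) → ℤ → Fin (n - k) → F
  causal : ∀ (m m' : ℤ → Fin k → F) (t : ℤ),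
    (∀ t' ≤ t, m t' = m' t') → parity m t = parity m' t

/-- A valid message stream vanishes at negative times. -/
def IsMsgStream {F : Type} [Zero F] {k : ℕ} (m : ℤ → Fin k → F) : Prop :=
  ∀ t < 0, m t = 0

/-- `(a, τ)` streaming-code property. -/
def IsSC {F : Type} [Zero F] {k n : ℕ} (C : PacketCode F k n) (a τ : ℕ) : Prop :=
  ∀ m m' : ℤ → Fin k → F, IsMsgStream m → IsMsgStream m' →
    ∀ t : ℤ, 0 ≤ t →
      ∀ E : Finset ℤ, (∀ x ∈ E, t ≤ x ∧ x ≤ t + τ) → t ∈ E → E.card ≤ a →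
        (∀ t' < t, m t' = m' t') →
        (∀ t' : ℤ, t ≤ t' → t' ≤ t + τ → t' ∉ E →
          m t' = m' t' ∧ C.parity m t' = C.parity m' t') →
        m t = m' t

/-- `(a, τ, r)` locally recoverable streaming code. -/
def IsLRSC {F : Type} [Zero F] {k n : ℕ} (C : PacketCode F k n) (a τ r : ℕ) : Prop :=
  IsSC C a τ ∧ IsSC C 1 r

/-!
Shrinking the window only removes erasure patterns, so an `(a, T)` streaming code is an
`(a, τ)` streaming code for every `τ ≥ T`; this is the first part, and it reduces the second to
`T = a(r+1) - 1`. For that window we take a diagonally interleaved code over `ZMod p`: every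
packet carries `r` message symbols and one parity symbol, and `m u j` enters the parities at times
`u + i(r+1) + j + 1`, `i < a`, with coefficient `x_u ^ i`, where `x_u = 2 ^ a ^ (u mod (T+1))`.
Besides `m u j`, the first of these parities only involves symbols of earlier packets and of the
next `r` packets, which gives the `(1, r)` property. To recover `m t j` from `a` erasures, the
parities at times `t + j + 1 + i(r+1)` form a staircase system in which every erased packet hides
at most one unknown. Cutting it at the lowest level where the rows catch up with the unknowns,
Hall's theorem yields a square subsystem containing `m t j`. Its integer determinant is a signed
sum of powers `2 ^ D` with pairwise distinct base-`a` expansions `D`, hence nonzero, and it stays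
nonzero modulo a prime `p` above its trivial bound.
-/

open Finset Function Matrix
open scoped Nat

lemma IsSC.mono {F : Type} [Zero F] {k n : ℕ} {C : PacketCode F k n} {a τ' τ : ℕ}
    (hC : IsSC C a τ') (h : τ' ≤ τ) : IsSC C a τ := by
  intro m m' hm hm' t ht E hE htE hcard hpast hwin
  refine hC m m' hm hm' t ht {x ∈ E | x ≤ t + τ'}
    (fun x hx => ⟨(hE x (mem_filter.mp hx).1).1, (mem_filter.mp hx).2⟩)
    (mem_filter.mpr ⟨htE, by omega⟩) ((card_filter_le _ _).trans hcard) hpast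
    fun t' h₁ h₂ h₃ => hwin t' h₁ (by omega) fun h => h₃ (mem_filter.mpr ⟨h, h₂⟩)

section Digits

variable {ι : Type*} [DecidableEq ι] {a : ℕ} {ν : ι → ℕ}

lemma sum_pow_mul_lt_pow (ha : 0 < a) {s : Finset ι} (hν : Set.InjOn ν s) {g : ι → ℕ}
    (hg : ∀ c ∈ s, g c < a) {B : ℕ} (hB : ∀ c ∈ s, ν c < B) :
    ∑ c ∈ s, a ^ ν c * g c < a ^ B := by
  induction s using Finset.induction_on_max_value ν generalizing B with
  | empty => simpa using pow_pos ha B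
  | insert c₀ s hc₀ hmax ih =>
    have hlt : ∀ c ∈ s, ν c < ν c₀ := fun c hc => (hmax c hc).lt_of_ne fun h =>
      hc₀ (hν (mem_insert_of_mem hc) (mem_insert_self c₀ s) h ▸ hc)
    have hrest := ih (hν.mono (by simp)) (fun c hc => hg c (mem_insert_of_mem hc)) hlt
    have hg₀ := hg c₀ (mem_insert_self c₀ s)
    calc ∑ c ∈ insert c₀ s, a ^ ν c * g c
        = a ^ ν c₀ * g c₀ + ∑ c ∈ s, a ^ ν c * g c := sum_insert hc₀
      _ < a ^ ν c₀ * (g c₀ + 1) := by rw [mul_add_one]; omega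
      _ ≤ a ^ ν c₀ * a := Nat.mul_le_mul_left _ hg₀
      _ = a ^ (ν c₀ + 1) := (pow_succ a _).symm
      _ ≤ a ^ B := Nat.pow_le_pow_right ha (hB c₀ (mem_insert_self c₀ s))

lemma eqOn_of_sum_pow_mul_eq {s : Finset ι} (hν : Set.InjOn ν s) {g h : ι → ℕ}
    (hg : ∀ c ∈ s, g c < a) (hh : ∀ c ∈ s, h c < a)
    (hgh : ∑ c ∈ s, a ^ ν c * g c = ∑ c ∈ s, a ^ ν c * h c) : Set.EqOn g h s := by
  induction s using Finset.induction_on_max_value ν with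
  | empty => simp
  | insert c₀ s hc₀ hmax ih =>
    have ha : 0 < a := (Nat.zero_le _).trans_lt (hg c₀ (mem_insert_self c₀ s))
    have hlt : ∀ c ∈ s, ν c < ν c₀ := fun c hc => (hmax c hc).lt_of_ne fun h =>
      hc₀ (hν (mem_insert_of_mem hc) (mem_insert_self c₀ s) h ▸ hc)
    have hνs := hν.mono (subset_insert c₀ s)
    have hgs := sum_pow_mul_lt_pow ha hνs (fun c hc => hg c (mem_insert_of_mem hc)) hlt
    have hhs := sum_pow_mul_lt_pow ha hνs (fun c hc => hh c (mem_insert_of_mem hc)) hlt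
    rw [sum_insert hc₀, sum_insert hc₀, add_comm (a ^ ν c₀ * g c₀),
      add_comm (a ^ ν c₀ * h c₀)] at hgh
    have hpos : 0 < a ^ ν c₀ := pow_pos ha _
    -- the leading digit is the quotient by `a ^ ν c₀`, the rest is the remainder
    have h₀ : g c₀ = h c₀ := by
      simpa [Nat.add_mul_div_left _ _ hpos, Nat.div_eq_of_lt hgs, Nat.div_eq_of_lt hhs]
        using congrArg (· / a ^ ν c₀) hgh
    have hrest : ∑ c ∈ s, a ^ ν c * g c = ∑ c ∈ s, a ^ ν c * h c := by
      simpa [Nat.add_mul_mod_self_left, Nat.mod_eq_of_lt hgs, Nat.mod_eq_of_lt hhs]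
        using congrArg (· % a ^ ν c₀) hgh
    intro c hc
    rcases mem_insert.mp (mem_coe.mp hc) with rfl | hc
    · exact h₀
    · exact ih hνs (fun c hc => hg c (mem_insert_of_mem hc))
        (fun c hc => hh c (mem_insert_of_mem hc)) hrest hc

end Digits

lemma sum_units_mul_two_pow_ne_zero {α : Type*} {S : Finset α} (hS : S.Nonempty) (ε : α → ℤˣ)
    {D : α → ℕ} (hD : Set.InjOn D S) : ∑ x ∈ S, (ε x : ℤ) * 2 ^ D x ≠ 0 := by
  classical
  obtain ⟨x₀, hx₀, hmin⟩ := S.exists_min_image D hS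
  -- every other term is divisible by `2 ^ (D x₀ + 1)`, the minimal one is not
  have hrest : (2 : ℤ) ^ (D x₀ + 1) ∣ ∑ x ∈ S.erase x₀, (ε x : ℤ) * 2 ^ D x := by
    refine dvd_sum fun x hx => Dvd.dvd.mul_left (pow_dvd_pow 2 ?_) _
    exact (hmin x (mem_of_mem_erase hx)).lt_of_ne
      fun h => ne_of_mem_erase hx (hD hx₀ (mem_of_mem_erase hx) h).symm
  rw [← add_sum_erase S _ hx₀]
  intro h
  have hdvd : (2 : ℤ) ^ (D x₀ + 1) ∣ (ε x₀ : ℤ) * 2 ^ D x₀ := by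
    rw [eq_neg_of_add_eq_zero_left h]; exact hrest.neg_right
  rw [Units.dvd_mul_left, pow_dvd_pow_iff (by norm_num) (by decide)] at hdvd
  omega

section Staircase

variable {ι : Type*}

def staircaseMatrix {R : Type*} [Semiring R] (x : ι → R) (f q : ι → ℕ) : Matrix ι ι R :=
  of fun c' c => if q c ≤ f c' then x c ^ (f c' - q c) else 0

lemma staircaseMatrix_map {R S : Type*} [Semiring R] [Semiring S] (ψ : R →+* S) (x : ι → R)
    (f q : ι → ℕ) : (staircaseMatrix x f q).map ψ = staircaseMatrix (ψ ∘ x) f q := by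
  ext c' c
  simp only [staircaseMatrix, map_apply, of_apply]
  split_ifs <;> simp

variable [Fintype ι] [DecidableEq ι] {a : ℕ} {f q ν : ι → ℕ}

lemma det_staircaseMatrix_ne_zero (hf : Injective f) (hfa : ∀ c, f c < a) (hqf : ∀ c, q c ≤ f c)
    (hν : Injective ν) : (staircaseMatrix (fun c => (2 : ℤ) ^ a ^ ν c) f q).det ≠ 0 := by
  set V : Finset (Equiv.Perm ι) := {σ | ∀ c, q c ≤ f (σ c)}
  set D : Equiv.Perm ι → ℕ := fun σ => ∑ c, a ^ ν c * (f (σ c) - q c)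
  have hdet : (staircaseMatrix (fun c => (2 : ℤ) ^ a ^ ν c) f q).det
      = ∑ σ ∈ V, (Equiv.Perm.sign σ : ℤ) * 2 ^ D σ := by
    rw [det_apply, sum_filter]
    refine sum_congr rfl fun σ _ => ?_
    simp only [staircaseMatrix, of_apply, prod_ite_zero, mem_univ, forall_const, ← pow_mul,
      prod_pow_eq_pow_sum, Units.smul_def, zsmul_eq_mul, D]
    split_ifs <;> simp
  -- distinct permutations in `V` give distinct base-`a` expansions `D σ`
  have hD : Set.InjOn D V := by
    intro σ hσ σ' hσ' hσσ'
    simp only [V, coe_filter, mem_univ, true_and, Set.mem_ofPred_eq] at hσ hσ'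
    have hdig := eqOn_of_sum_pow_mul_eq hν.injOn (fun c _ => (Nat.sub_le _ _).trans_lt (hfa _))
      (fun c _ => (Nat.sub_le _ _).trans_lt (hfa _)) hσσ'
    ext c
    have h₁ := hdig (mem_coe.mpr (mem_univ c))
    have h₂ := hσ c
    have h₃ := hσ' c
    exact hf (by simp only at h₁; omega)
  rw [hdet]
  exact sum_units_mul_two_pow_ne_zero ⟨1, by simpa [V] using hqf⟩ _ hD

lemma staircaseMatrix_mulVec_eq_zero {N p : ℕ} [Fact p.Prime]
    (hp : a ! * (2 ^ (a ^ N * a)) ^ a < p) (hf : Injective f) (hfa : ∀ c, f c < a)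
    (hqf : ∀ c, q c ≤ f c) (hν : Injective ν) (hνN : ∀ c, ν c < N) {z : ι → ZMod p}
    (hz : staircaseMatrix (fun c => (2 : ZMod p) ^ a ^ ν c) f q *ᵥ z = 0) : z = 0 := by
  set M := staircaseMatrix (fun c => (2 : ℤ) ^ a ^ ν c) f q
  have hcard : Fintype.card ι ≤ a := by
    simpa using Fintype.card_le_of_injective (fun c => (⟨f c, hfa c⟩ : Fin a))
      fun c c' h => hf (by simpa using h)
  have hentry : ∀ c' c, |M c' c| ≤ 2 ^ (a ^ N * a) := by
    intro c' c
    have ha : 0 < a := (Nat.zero_le _).trans_lt (hfa c)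
    simp only [M, staircaseMatrix, of_apply]
    split_ifs
    · rw [← pow_mul, abs_pow, abs_two]
      exact pow_le_pow_right₀ one_le_two (Nat.mul_le_mul (Nat.pow_le_pow_right ha (hνN c).le)
        ((Nat.sub_le _ _).trans (hfa c').le))
    · simp
  have hbound : |M.det| < p := by
    calc |M.det| ≤ (Fintype.card ι)! • (2 ^ (a ^ N * a) : ℤ) ^ Fintype.card ι :=
          det_le (abv := AbsoluteValue.abs) hentry
      _ ≤ a ! * (2 ^ (a ^ N * a) : ℤ) ^ a := by
          rw [nsmul_eq_mul]
          gcongr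
          exact one_le_pow₀ one_le_two
      _ < p := by exact_mod_cast hp
  have hdet : (staircaseMatrix (fun c => (2 : ZMod p) ^ a ^ ν c) f q).det ≠ 0 := by
    have hmap : staircaseMatrix (fun c => (2 : ZMod p) ^ a ^ ν c) f q
        = M.map (Int.castRingHom _) := by
      rw [staircaseMatrix_map]; congr 1; ext c; simp
    rw [hmap, ← RingHom.mapMatrix_apply, ← RingHom.map_det, eq_intCast, Ne,
      ZMod.intCast_zmod_eq_zero_iff_dvd]
    exact fun hdvd =>
      det_staircaseMatrix_ne_zero hf hfa hqf hν (Int.eq_zero_of_abs_lt_dvd hdvd hbound)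
  exact eq_zero_of_mulVec_eq_zero hdet hz

end Staircase

section StaircaseSystem

variable {κ : Type*}

lemma exists_injective_le_of_card_filter_le (Cs : Finset κ) (R : Finset ℕ) (q : κ → ℕ)
    (h : ∀ x, #{e ∈ Cs | x ≤ q e} ≤ #{i ∈ R | x ≤ i}) :
    ∃ f : Cs → ℕ, Injective f ∧ ∀ c, f c ∈ R ∧ q c ≤ f c := by
  obtain ⟨f, hf, hfR⟩ := (all_card_le_biUnion_card_iff_exists_injective
    fun c : Cs => {i ∈ R | q c ≤ i}).mp fun s => by
      rcases s.eq_empty_or_nonempty with rfl | hs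
      · simp
      -- Hall's condition for `s` is the hypothesis at the lowest level occurring in `s`
      obtain ⟨c₀, hc₀, hmin⟩ := s.exists_min_image (fun c => q c) hs
      calc #s ≤ #{e ∈ Cs | q c₀ ≤ q e} :=
            card_le_card_of_injOn Subtype.val (fun c hc => by simpa using hmin c hc)
              Subtype.val_injective.injOn
        _ ≤ #{i ∈ R | q c₀ ≤ i} := h _
        _ ≤ _ := card_le_card (subset_biUnion_of_mem (fun c : Cs => {i ∈ R | q c ≤ i}) hc₀)
  exact ⟨f, hf, fun c => mem_filter.mp (hfR c)⟩

lemma card_filter_succ_le_add_card_filter_le (T : Finset κ) (g : κ → ℕ) {y θ : ℕ} (hy : y < θ) :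
    #{e ∈ {e ∈ T | g e ≤ θ} | y + 1 ≤ g e} + #{e ∈ T | g e ≤ y} = #{e ∈ T | g e ≤ θ} := by
  rw [← card_filter_add_card_filter_not (s := {e ∈ T | g e ≤ θ}) (fun e => y + 1 ≤ g e)]
  congr 2
  rw [filter_filter]
  exact filter_congr fun e _ => by omega

lemma exists_threshold_card_filter_le (S : Finset κ) (I : Finset ℕ) (q : κ → ℕ)
    (hSI : #S ≤ #I) :
    ∃ θ, ∀ x, #{e ∈ {e ∈ S | q e ≤ θ} | x ≤ q e} ≤ #{i ∈ {i ∈ I | i ≤ θ} | x ≤ i} := by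
  have hex : ∃ θ, #{e ∈ S | q e ≤ θ} ≤ #{i ∈ I | i ≤ θ} := by
    refine ⟨S.sup q + I.sup id, ?_⟩
    rwa [filter_true_of_mem fun e he => (le_sup he).trans (Nat.le_add_right _ _),
      filter_true_of_mem fun i hi =>
        (show i ≤ I.sup id from le_sup (f := id) hi).trans (Nat.le_add_left _ _)]
  -- take the least such `θ`: below it, unknowns outnumber rows at every level
  obtain ⟨θ, hθ, hlow⟩ : ∃ θ, #{e ∈ S | q e ≤ θ} ≤ #{i ∈ I | i ≤ θ} ∧
      ∀ y < θ, ¬ #{e ∈ S | q e ≤ y} ≤ #{i ∈ I | i ≤ y} :=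
    ⟨Nat.find hex, Nat.find_spec hex, fun y hy => Nat.find_min hex hy⟩
  refine ⟨θ, fun x => ?_⟩
  rcases x with _ | y
  · rw [filter_true_of_mem fun _ _ => Nat.zero_le _, filter_true_of_mem fun _ _ => Nat.zero_le _]
    exact hθ
  by_cases hy : y < θ
  · have hy' := hlow y hy
    have hS := card_filter_succ_le_add_card_filter_le S q hy
    have hI := card_filter_succ_le_add_card_filter_le I (fun i => i) hy
    omega
  · rw [filter_false_of_mem fun e he => by have := (mem_filter.mp he).2; omega, card_empty]
    exact Nat.zero_le _

lemma eq_zero_of_staircase_system {a N p : ℕ} [Fact p.Prime]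
    (hp : a ! * (2 ^ (a ^ N * a)) ^ a < p) {S : Finset κ} {I : Finset ℕ} (hIa : ∀ i ∈ I, i < a)
    (hSI : #S ≤ #I) {q ν : κ → ℕ} (hν : Set.InjOn ν S) (hνN : ∀ e ∈ S, ν e < N)
    {z : κ → ZMod p}
    (hrow : ∀ i ∈ I, ∑ e ∈ S with q e ≤ i, ((2 : ZMod p) ^ a ^ ν e) ^ (i - q e) * z e = 0)
    {e : κ} (he : e ∈ S) (hqe : q e = 0) : z e = 0 := by
  classical
  obtain ⟨θ, hθ⟩ := exists_threshold_card_filter_le S I q hSI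
  set Cs : Finset κ := {e ∈ S | q e ≤ θ}
  have hCs : ∀ c ∈ Cs, c ∈ S ∧ q c ≤ θ := fun c hc => mem_filter.mp hc
  obtain ⟨f, hf, hfR⟩ := exists_injective_le_of_card_filter_le Cs {i ∈ I | i ≤ θ} q hθ
  have hfI : ∀ c, f c ∈ I ∧ f c ≤ θ := fun c => mem_filter.mp (hfR c).1
  have hz : (fun c : Cs => z c) = 0 := by
    refine staircaseMatrix_mulVec_eq_zero (ν := fun c : Cs => ν c) hp hf
      (fun c => hIa _ (hfI c).1) (fun c => (hfR c).2)
      (fun c c' h => Subtype.ext (hν (hCs c c.2).1 (hCs c' c'.2).1 h))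
      (fun c => hνN c (hCs c c.2).1) (funext fun c' => ?_)
    -- row `c'` of the square system is the equation of row `f c'`, whose unknowns all lie in `Cs`
    rw [Pi.zero_apply, ← hrow (f c') (hfI c').1, mulVec, dotProduct]
    simp only [staircaseMatrix, of_apply, ite_mul, zero_mul]
    rw [sum_coe_sort Cs (fun c => if q c ≤ f c' then ((2 : ZMod p) ^ a ^ ν c) ^ (f c' - q c) * z c
      else 0), ← sum_filter, filter_filter]
    exact sum_congr (filter_congr fun c _ => by have := (hfI c').2; omega) fun _ _ => rfl
  exact congrFun hz ⟨e, mem_filter.mpr ⟨he, hqe ▸ Nat.zero_le θ⟩⟩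

end StaircaseSystem

section Code

variable {F : Type} [CommRing F] {a r : ℕ} {α : ℤ → F}

/-- Message symbol `m u j` enters the parity at time `u + lag r i j` for each `i < a`. -/
def lag (r i : ℕ) (j : Fin r) : ℤ := i * (r + 1) + j + 1

def diagParity (a r : ℕ) (α : ℤ → F) (m : ℤ → Fin r → F) (s : ℤ) : F :=
  ∑ i ∈ range a, ∑ j : Fin r, α (s - lag r i j) ^ i * m (s - lag r i j) j

def diagCode (a r : ℕ) (α : ℤ → F) : PacketCode F r (r + 1) where
  parity m s _ := diagParity a r α m s
  causal m m' t h := funext fun _ => sum_congr rfl fun i _ => sum_congr rfl fun j _ => by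
    have : (0 : ℤ) ≤ i * (r + 1) := by positivity
    rw [h _ (by simp only [lag]; omega)]

lemma diagParity_sub (m m' : ℤ → Fin r → F) (s : ℤ) :
    diagParity a r α m s - diagParity a r α m' s = diagParity a r α (m - m') s := by
  simp only [diagParity, ← sum_sub_distrib, Pi.sub_apply, mul_sub]

lemma isSC_diagCode_of {A T : ℕ}
    (h : ∀ (d : ℤ → Fin r → F) (t : ℤ) (E : Finset ℤ), (∀ x ∈ E, t ≤ x ∧ x ≤ t + T) →
      t ∈ E → #E ≤ A → (∀ u, u < t ∨ (u ≤ t + T ∧ u ∉ E) → d u = 0) →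
      (∀ u, t ≤ u → u ≤ t + T → u ∉ E → diagParity a r α d u = 0) → d t = 0) :
    IsSC (diagCode a r α) A T := by
  intro m m' _ _ t _ E hE htE hcard hpast hwin
  refine sub_eq_zero.mp (h (m - m') t E hE htE hcard (fun u hu => ?_) (fun u h₁ h₂ h₃ => ?_))
  · rcases hu with hu | ⟨hu, huE⟩
    · exact sub_eq_zero.mpr (hpast u hu)
    · by_cases htu : t ≤ u
      · exact sub_eq_zero.mpr (hwin u htu hu huE).1
      · exact sub_eq_zero.mpr (hpast u (not_le.mp htu))
  · rw [← diagParity_sub, sub_eq_zero]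
    exact congrFun (hwin u h₁ h₂ h₃).2 ⟨0, by omega⟩

/-- The time of the message symbol with coordinate `e.2` whose parities include those at the
times `w + 1 + i * (r + 1)` with `i ≥ e.1`, the one at `i = e.1` being its first. -/
def diagPos (r : ℕ) (w : ℤ) (e : ℕ × Fin r) : ℤ := w - e.2 + e.1 * (r + 1)

lemma diagParity_eq_sum_diagPos {d : ℤ → Fin r → F} {t : ℤ} (hd : ∀ u < t, d u = 0) (j₀ : Fin r)
    {i : ℕ} (hi : i < a) :
    diagParity a r α d (t + j₀ + 1 + i * (r + 1)) =
      ∑ e ∈ range (i + 1) ×ˢ univ,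
        α (diagPos r (t + j₀) e) ^ (i - e.1) * d (diagPos r (t + j₀) e) e.2 := by
  rw [diagParity, ← sum_subset (range_subset_range.mpr hi) ?_, ← sum_range_reflect, sum_product]
  · refine sum_congr rfl fun ℓ hℓ => sum_congr rfl fun j _ => ?_
    have hℓi : ℓ ≤ i := Nat.lt_succ_iff.mp (mem_range.mp hℓ)
    have hpos : t + j₀ + 1 + i * (r + 1) - lag r (i + 1 - 1 - ℓ) j = diagPos r (t + j₀) (ℓ, j) := by
      simp only [lag, diagPos, Nat.add_sub_cancel, Nat.cast_sub hℓi]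
      ring
    rw [hpos]
    rfl
  · intro i' _ hi'
    refine sum_eq_zero fun j _ => ?_
    have : ((i : ℤ) + 1) * (r + 1) ≤ i' * (r + 1) := mul_le_mul_of_nonneg_right
      (by exact_mod_cast not_lt.mp (mem_range.not.mp hi')) (by positivity)
    rw [add_one_mul] at this
    rw [hd _ (by simp only [lag]; omega), Pi.zero_apply, mul_zero]

theorem isSC_one_diagCode (ha : 0 < a) (α : ℤ → F) : IsSC (diagCode a r α) 1 r := by
  refine isSC_diagCode_of fun d t E _ htE hcard hd hpar => funext fun j => ?_
  have hEt : ∀ x ∈ E, x = t := fun x hx => card_le_one.mp hcard x hx t htE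
  -- the first parity of `m t j` involves no other unknown symbol
  have hrow := hpar (t + j + 1 + (0 : ℕ) * (r + 1)) (by push_cast; omega) (by push_cast; omega)
    fun h => by have := hEt _ h; simp at this; omega
  rw [diagParity_eq_sum_diagPos (fun u hu => hd u (.inl hu)) j ha, sum_product, sum_range_one,
    sum_eq_single j] at hrow
  · simpa [diagPos] using hrow
  · intro j' _ hj'
    have hjj' : (j : ℤ) ≠ j' := fun h => hj' (Fin.ext (by exact_mod_cast h)).symm
    rw [hd _ ?_, Pi.zero_apply, mul_zero]
    simp only [diagPos, Nat.cast_zero, zero_mul, add_zero]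
    rcases lt_or_gt_of_ne hjj' with h | h
    · exact .inl (by omega)
    · exact .inr ⟨by omega, fun h' => by have := hEt _ h'; omega⟩
  · simp

lemma diagPos_injective (w : ℤ) : Injective (diagPos r w) := by
  rintro ⟨ℓ, j⟩ ⟨ℓ', j'⟩ h
  simp only [diagPos] at h
  have hj : (j : ℤ) = j' := by
    have hdvd : ((r : ℤ) + 1) ∣ (j : ℤ) - j' := ⟨ℓ - ℓ', by linear_combination -h⟩
    have := Int.eq_zero_of_abs_lt_dvd hdvd (by rw [abs_lt]; omega)
    omega
  have hℓ : (ℓ : ℤ) = ℓ' := mul_right_cancel₀ (by positivity : (r : ℤ) + 1 ≠ 0) (by omega)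
  exact Prod.ext (by exact_mod_cast hℓ) (Fin.ext (by exact_mod_cast hj))

lemma diagPos_ne (w : ℤ) (e : ℕ × Fin r) (i : ℕ) : diagPos r w e ≠ w + 1 + i * (r + 1) := by
  intro h
  simp only [diagPos] at h
  have hdvd : ((r : ℤ) + 1) ∣ (e.2 : ℤ) + 1 := ⟨e.1 - i, by linear_combination -h⟩
  have := Int.eq_zero_of_abs_lt_dvd hdvd (by rw [abs_lt]; omega)
  omega

/-- Every erased packet hides at most one unknown of the staircase system at `w`, and erased
parity rows are never among them. -/
lemma card_filter_diagPos_mem_le (w : ℤ) {E : Finset ℤ} (hE : #E ≤ a) :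
    #{e ∈ range a ×ˢ (univ : Finset (Fin r)) | diagPos r w e ∈ E} ≤
      #{i ∈ range a | w + 1 + (i : ℕ) * ((r : ℤ) + 1) ∉ E} := by
  have hrow : Injective fun i : ℕ => w + 1 + i * ((r : ℤ) + 1) := fun i i' h => by
    exact_mod_cast mul_right_cancel₀ (by positivity : (r : ℤ) + 1 ≠ 0) (add_left_cancel h)
  have hdisj : #{e ∈ range a ×ˢ (univ : Finset (Fin r)) | diagPos r w e ∈ E} +
      #{i ∈ range a | w + 1 + (i : ℕ) * ((r : ℤ) + 1) ∈ E} ≤ #E := by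
    rw [← card_image_of_injective _ (diagPos_injective w), ← card_image_of_injective _ hrow,
      ← card_union_of_disjoint]
    · refine card_le_card (union_subset ?_ ?_) <;> intro x hx <;>
        obtain ⟨y, hy, rfl⟩ := mem_image.mp hx <;> exact (mem_filter.mp hy).2
    · refine disjoint_left.mpr fun x hx hx' => ?_
      obtain ⟨e, -, rfl⟩ := mem_image.mp hx
      obtain ⟨i, -, hi⟩ := mem_image.mp hx'
      exact diagPos_ne w e i hi.symm
  have hsplit := card_filter_add_card_filter_not (s := range a)
    (fun i : ℕ => w + 1 + i * ((r : ℤ) + 1) ∈ E)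
  rw [card_range] at hsplit
  omega

lemma diagParity_eq_sum_erased {d : ℤ → Fin r → F} {t : ℤ} {T : ℕ} {E : Finset ℤ}
    (hd : ∀ u, u < t ∨ (u ≤ t + T ∧ u ∉ E) → d u = 0) (j₀ : Fin r) {i : ℕ} (hi : i < a)
    (hiT : t + j₀ + 1 + i * ((r : ℤ) + 1) ≤ t + T) :
    ∑ e ∈ {e ∈ range a ×ˢ univ | diagPos r (t + j₀) e ∈ E} with e.1 ≤ i,
        α (diagPos r (t + j₀) e) ^ (i - e.1) * d (diagPos r (t + j₀) e) e.2 =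
      diagParity a r α d (t + j₀ + 1 + i * (r + 1)) := by
  rw [diagParity_eq_sum_diagPos (fun u hu => hd u (.inl hu)) j₀ hi]
  refine sum_subset (fun e he => ?_) (fun e he he' => ?_)
  · exact mem_product.mpr ⟨mem_range.mpr (Nat.lt_succ_of_le (mem_filter.mp he).2), mem_univ _⟩
  have hei : e.1 ≤ i := Nat.lt_succ_iff.mp (mem_range.mp (mem_product.mp he).1)
  have hnE : diagPos r (t + j₀) e ∉ E := fun h => he' (mem_filter.mpr ⟨mem_filter.mpr
    ⟨mem_product.mpr ⟨mem_range.mpr (by omega), mem_univ _⟩, h⟩, hei⟩)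
  have : (e.1 : ℤ) * (r + 1) ≤ i * (r + 1) :=
    mul_le_mul_of_nonneg_right (by exact_mod_cast hei) (by positivity)
  rw [hd _ (.inr ⟨by simp only [diagPos]; omega, hnE⟩), Pi.zero_apply, mul_zero]

end Code

def windowIndex (T : ℕ) (u : ℤ) : ℕ := (u % ((T : ℤ) + 1)).toNat

lemma windowIndex_lt (T : ℕ) (u : ℤ) : windowIndex T u < T + 1 := by
  have := Int.emod_lt_of_pos u (by positivity : (0 : ℤ) < T + 1)
  simp only [windowIndex]
  omega

lemma windowIndex_injOn (T : ℕ) (t : ℤ) : Set.InjOn (windowIndex T) (Set.Icc t (t + T)) := by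
  intro u ⟨hu₁, hu₂⟩ u' ⟨hu₁', hu₂'⟩ h
  have h₀ := Int.emod_nonneg u (by positivity : (T : ℤ) + 1 ≠ 0)
  have h₀' := Int.emod_nonneg u' (by positivity : (T : ℤ) + 1 ≠ 0)
  have hmod : u ≡ u' [ZMOD T + 1] := by simp only [windowIndex] at h; unfold Int.ModEq; omega
  have := Int.eq_zero_of_abs_lt_dvd hmod.dvd (by rw [abs_lt]; omega)
  omega

theorem isSC_diagCode_two_pow {a r T p : ℕ} [Fact p.Prime] (hT : a * (r + 1) ≤ T + 1)
    (hp : a ! * (2 ^ (a ^ (T + 1) * a)) ^ a < p) :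
    IsSC (diagCode a r fun u => (2 : ZMod p) ^ a ^ windowIndex T u) a T := by
  refine isSC_diagCode_of fun d t E hE htE hcard hd hpar => funext fun j₀ => ?_
  have hrow_mem : ∀ i < a, t ≤ t + j₀ + 1 + i * ((r : ℤ) + 1) ∧
      t + j₀ + 1 + i * ((r : ℤ) + 1) ≤ t + T := by
    intro i hi
    have h₁ : (0 : ℤ) ≤ i * (r + 1) := by positivity
    have h₂ : ((i : ℤ) + 1) * (r + 1) ≤ a * (r + 1) :=
      mul_le_mul_of_nonneg_right (by exact_mod_cast hi) (by positivity)
    have h₃ : (a : ℤ) * (r + 1) ≤ T + 1 := by exact_mod_cast hT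
    have h₄ : (j₀ : ℤ) < r := by exact_mod_cast j₀.isLt
    constructor <;> linarith
  have hrow : ∀ i ∈ {i ∈ range a | t + j₀ + 1 + (i : ℕ) * ((r : ℤ) + 1) ∉ E},
      ∑ e ∈ {e ∈ range a ×ˢ univ | diagPos r (t + j₀) e ∈ E} with e.1 ≤ i,
        ((2 : ZMod p) ^ a ^ windowIndex T (diagPos r (t + j₀) e)) ^ (i - e.1) *
          d (diagPos r (t + j₀) e) e.2 = 0 := by
    intro i hi
    obtain ⟨hia, hiE⟩ := mem_filter.mp hi
    obtain ⟨hti, hiT⟩ := hrow_mem i (mem_range.mp hia)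
    exact (diagParity_eq_sum_erased hd j₀ (mem_range.mp hia) hiT).trans (hpar _ hti hiT hiE)
  have key := eq_zero_of_staircase_system hp (fun i hi => mem_range.mp (mem_filter.mp hi).1)
    (card_filter_diagPos_mem_le _ hcard)
    (fun e he e' he' h => diagPos_injective _
      (windowIndex_injOn T t (hE _ (mem_filter.mp he).2) (hE _ (mem_filter.mp he').2) h))
    (fun _ _ => windowIndex_lt T _) hrow (e := (0, j₀))
    (mem_filter.mpr ⟨mem_product.mpr ⟨mem_range.mpr ((card_pos.mpr ⟨t, htE⟩).trans_le hcard),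
      mem_univ _⟩, by simpa [diagPos]⟩) rfl
  simpa [diagPos] using key

theorem LRSC_large_tau (a τ r : ℕ) (ha : 1 < a) (hr : 1 ≤ r) (hpar : a * (r + 1) < τ + 1) :
    (∀ (F : Type) [Field F] [Fintype F] (k n : ℕ) (C : PacketCode F k n),
        IsLRSC C a (a * (r + 1) - 1) r → IsLRSC C a τ r) ∧
    (∃ (F : Type) (_ : Field F) (_ : Fintype F) (k n : ℕ) (C : PacketCode F k n),
        1 ≤ k ∧ k < n ∧ IsLRSC C a τ r ∧
        (k : ℚ) / n = (r : ℚ) / ((r : ℚ) + 1) ∧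
        (r : ℚ) / ((r : ℚ) + 1) =
          min (((τ : ℚ) + 1 - a) / ((τ : ℚ) + 1)) ((r : ℚ) / ((r : ℚ) + 1))) := by
  have hmono : ∀ (F : Type) [Field F] [Fintype F] (k n : ℕ) (C : PacketCode F k n),
      IsLRSC C a (a * (r + 1) - 1) r → IsLRSC C a τ r :=
    fun _ _ _ _ _ _ hC => ⟨hC.1.mono (by omega), hC.2⟩
  refine ⟨hmono, ?_⟩
  set T := a * (r + 1) - 1
  obtain ⟨p, hp, hprime⟩ := Nat.exists_infinite_primes (a ! * (2 ^ (a ^ (T + 1) * a)) ^ a + 1)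
  have := Fact.mk hprime
  refine ⟨ZMod p, inferInstance, inferInstance, r, r + 1,
    diagCode a r fun u => (2 : ZMod p) ^ a ^ windowIndex T u, hr, by omega,
    hmono _ _ _ _ ⟨isSC_diagCode_two_pow (by omega) hp, isSC_one_diagCode (by omega) _⟩,
    by push_cast; rfl, ?_⟩
  have : (a : ℚ) * (r + 1) < τ + 1 := by exact_mod_cast hpar
  rw [eq_comm, min_eq_right_iff, div_le_div_iff₀ (by positivity) (by positivity)]
  nlinarith
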